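/- Suppose β ∈ ℝ^p is s-sparse with support set I, let B = β ⊗ β, let w_β = β/‖β‖₂ + s^{-1/2}·sign(β), let T = { x ⊗ β + β ⊗ y : x, y ∈ ℝ^p }, and let I also denote the subspace of matrices supported on I × I. If W̃ ∈ ℝ^{p×p} satisfies ⟨W̃ u, v⟩ ≤ (1/5)·θ_s(u,v) for all u, v ∈ ℝ^p, then W = w_β ⊗ w_β + P_{T^⊥ ∩ I^⊥}(W̃) is a subgradient of the mixed atomic norm at B, where P_{T^⊥ ∩ I^⊥} is the orthogonal projection (in the Frobenius inner product) onto T^⊥ ∩ I^⊥: ⟨Wβ, β⟩ = θ_s(β,β) and ⟨Wu, v⟩ ≤ θ_s(u,v) for all u, v ∈ ℝ^p. -/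

import Mathlib

open MeasureTheory ProbabilityTheory Finset

noncomputable section

/-- Vectors in ℝ^p. -/
abbrev Vec (p : ℕ) := Fin p → ℝ

/-- p × p real matrices. -/
abbrev Mat (p : ℕ) := Matrix (Fin p) (Fin p) ℝ

/-- Euclidean (ℓ2) norm. -/
def l2 {p : ℕ} (u : Vec p) : ℝ := Real.sqrt (∑ i, (u i) ^ 2)

/-- ℓ1 norm. -/
def l1 {p : ℕ} (u : Vec p) : ℝ := ∑ i, |u i|

/-- Euclidean inner product. -/
def dotp {p : ℕ} (u v : Vec p) : ℝ := ∑ i, u i * v i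

/-- θ_s(u,v) = (‖u‖₂ + s^{-1/2}‖u‖₁)(‖v‖₂ + s^{-1/2}‖v‖₁). -/
def theta {p : ℕ} (s : ℝ) (u v : Vec p) : ℝ :=
  (l2 u + (Real.sqrt s)⁻¹ * l1 u) * (l2 v + (Real.sqrt s)⁻¹ * l1 v)

/-- Frobenius (Hilbert–Schmidt) inner product. -/
def frob {p : ℕ} (A B : Mat p) : ℝ := ∑ i, ∑ j, A i j * B i j

/-- Frobenius norm. -/
def frobNorm {p : ℕ} (A : Mat p) : ℝ := Real.sqrt (frob A A)

/-- The mixed atomic norm ‖B‖_{Γ_s}. -/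
def mixedNorm {p : ℕ} (s : ℝ) (B : Mat p) : ℝ :=
  sInf { t | ∃ (K : ℕ) (u v : Fin K → Vec p),
    B = ∑ k, Matrix.vecMulVec (u k) (v k) ∧ t = ∑ k, theta s (u k) (v k) }

/-- Dual norm of the mixed atomic norm. -/
def dualMixedNorm {p : ℕ} (s : ℝ) (Z : Mat p) : ℝ :=
  sSup { t | ∃ B : Mat p, mixedNorm s B ≤ 1 ∧ t = frob Z B }

/-- A vector is `s`-sparse if it has at most `s` nonzero entries. -/
def IsSparse {p : ℕ} (s : ℕ) (u : Vec p) : Prop := {i | u i ≠ 0}.ncard ≤ s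

/-- Nuclear norm of a real matrix: the sum of its singular values. -/
def nuclearNorm {p : ℕ} (A : Mat p) : ℝ :=
  ∑ i, Real.sqrt ((show (A.transpose * A).IsHermitian by
    simpa using Matrix.isHermitian_conjTranspose_mul_self A).eigenvalues i)

/-- Operator (spectral) norm of a real matrix. -/
def opNorm {p : ℕ} (A : Mat p) : ℝ :=
  sSup { t | ∃ u v : Vec p, l2 u ≤ 1 ∧ l2 v ≤ 1 ∧ t = dotp (A.mulVec u) v }

/-- `X` has sub-Gaussian (ψ₂) norm at most `K`: `E exp(X²/K²) ≤ 2`. -/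
def HasSubgaussianNorm {Ω : Type*} [MeasurableSpace Ω] (μ : Measure Ω) (X : Ω → ℝ) (K : ℝ) :
    Prop := ∫ ω, Real.exp ((X ω) ^ 2 / K ^ 2) ∂μ ≤ 2

/-- `W` is a subgradient of the mixed atomic norm `‖·‖_{Γ_s}` at `B`. -/
def InSubdiff {p : ℕ} (s : ℝ) (W B : Mat p) : Prop :=
  ∀ C : Mat p, mixedNorm s B + frob W (C - B) ≤ mixedNorm s C

/-! Split a vector `z` into its component along `β`, the part on `supp β` of its component
orthogonal to `β`, and its part off `supp β`. Accordingly `v ⊗ u` splits into a matrix in `T`, a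
matrix supported on `supp β × supp β`, and its component in `T^⊥ ∩ I^⊥`; the projection `Wp`
annihilates the first two and agrees with `W̃` on the last, where `W̃` is controlled by `θ_s / 5`.
On `supp β` the sparse Cauchy–Schwarz inequality `‖z‖₁ ≤ √s ‖z‖₂` bounds the `θ_s`-factor by
`2‖z‖₂`, and `|⟨w_β, u⟩|` is at most the length of the component of `u` along `β` plus
`s^{-1/2}` times the ℓ1 mass of `u` on `supp β`. What remains is a scalar inequality in the
lengths of the three mutually orthogonal components of `u` and of `v`. -/

open Matrix

variable {p : ℕ}

lemma dotp_eq_dotProduct (u v : Vec p) : dotp u v = u ⬝ᵥ v := rfl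

lemma l2_nonneg (u : Vec p) : 0 ≤ l2 u := Real.sqrt_nonneg _

lemma l1_nonneg (u : Vec p) : 0 ≤ l1 u := sum_nonneg fun _ _ => abs_nonneg _

lemma sq_l2 (u : Vec p) : l2 u ^ 2 = u ⬝ᵥ u := by
  rw [l2, Real.sq_sqrt (by positivity)]
  simp only [dotProduct, sq]

lemma Real.sign_mul_self_eq_abs (r : ℝ) : Real.sign r * r = |r| := by
  rcases lt_trichotomy r 0 with h | rfl | h
  · rw [Real.sign_of_neg h, abs_of_neg h, neg_one_mul]
  · simp
  · rw [Real.sign_of_pos h, abs_of_pos h, one_mul]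

lemma l1_le_sqrt_mul_l2 {s : ℕ} {β z : Vec p} (hβ : IsSparse s β)
    (hz : ∀ i, β i = 0 → z i = 0) : l1 z ≤ √s * l2 z := by
  classical
  set S := univ.filter fun i => β i ≠ 0
  have hS : (#S : ℝ) ≤ s := by
    have hsupp : {i | β i ≠ 0} = (S : Set (Fin p)) := by ext; simp [S]
    have hcard : #S ≤ s := by rwa [IsSparse, hsupp, Set.ncard_coe_finset] at hβ
    exact_mod_cast hcard
  have hl1 : l1 z = ∑ i ∈ S, |z i| := by
    rw [l1, sum_filter_of_ne]
    intro i _ hi hβi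
    exact hi (by rw [hz i hβi, abs_zero])
  refine le_of_sq_le_sq ?_ (mul_nonneg (Real.sqrt_nonneg _) (l2_nonneg z))
  calc l1 z ^ 2 ≤ #S * ∑ i ∈ S, |z i| ^ 2 := hl1 ▸ sq_sum_le_card_mul_sum_sq
    _ ≤ s * ∑ i, z i ^ 2 := by
        simp only [sq_abs]
        exact mul_le_mul hS
          (sum_le_sum_of_subset_of_nonneg (subset_univ S) fun i _ _ => sq_nonneg _)
          (sum_nonneg fun i _ => sq_nonneg _) (Nat.cast_nonneg s)
    _ = (√s * l2 z) ^ 2 := by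
        rw [mul_pow, Real.sq_sqrt (Nat.cast_nonneg s), l2, Real.sq_sqrt (by positivity)]

def thetaFactor (s : ℝ) (u : Vec p) : ℝ := l2 u + (√s)⁻¹ * l1 u

lemma theta_eq_mul (s : ℝ) (u v : Vec p) : theta s u v = thetaFactor s u * thetaFactor s v := rfl

lemma thetaFactor_le_two_mul_l2 {s : ℕ} {β z : Vec p} (hβ : IsSparse s β)
    (hz : ∀ i, β i = 0 → z i = 0) : thetaFactor s z ≤ 2 * l2 z := by
  suffices (√s)⁻¹ * l1 z ≤ l2 z by rw [thetaFactor]; linarith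
  rcases s.eq_zero_or_pos with rfl | hs
  · simpa using l2_nonneg z
  · rw [inv_mul_le_iff₀ (by positivity)]
    exact l1_le_sqrt_mul_l2 hβ hz

section Decomposition

variable (β : Vec p)

def onSupp (z : Vec p) : Vec p := fun i => if β i = 0 then 0 else z i

def offSupp (z : Vec p) : Vec p := fun i => if β i = 0 then z i else 0

def perpOnSupp (z : Vec p) : Vec p :=
  fun i => if β i = 0 then 0 else z i - dotp z β / l2 β ^ 2 * β i

lemma apply_eq_add_perpOnSupp_add_offSupp (z : Vec p) (i : Fin p) :
    z i = dotp z β / l2 β ^ 2 * β i + perpOnSupp β z i + offSupp β z i := by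
  by_cases hi : β i = 0 <;> simp [perpOnSupp, offSupp, hi]

lemma perpOnSupp_eq_zero {z : Vec p} {i : Fin p} (hi : β i = 0) : perpOnSupp β z i = 0 := by
  simp [perpOnSupp, hi]

lemma offSupp_dotProduct_self (z : Vec p) : offSupp β z ⬝ᵥ β = 0 :=
  sum_eq_zero fun i _ => by by_cases hi : β i = 0 <;> simp [offSupp, hi]

lemma perpOnSupp_dotProduct_self (z : Vec p) : perpOnSupp β z ⬝ᵥ β = 0 := by
  rcases eq_or_ne β 0 with rfl | hβ
  · exact dotProduct_zero _
  have hl2 : l2 β ^ 2 ≠ 0 := by rwa [sq_l2, Ne, dotProduct_self_eq_zero]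
  have hterm : ∀ i, perpOnSupp β z i * β i = z i * β i - dotp z β / l2 β ^ 2 * (β i * β i) :=
    fun i => by by_cases hi : β i = 0 <;> simp [perpOnSupp, hi]; ring
  simp only [dotProduct, hterm, sum_sub_distrib, ← mul_sum]
  rw [← dotProduct, ← dotProduct, ← sq_l2, ← dotp_eq_dotProduct, div_mul_cancel₀ _ hl2, sub_self]

lemma perpOnSupp_dotProduct_offSupp (z y : Vec p) : perpOnSupp β z ⬝ᵥ offSupp β y = 0 :=
  sum_eq_zero fun i _ => by by_cases hi : β i = 0 <;> simp [perpOnSupp, offSupp, hi]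

lemma l1_eq_l1_onSupp_add_l1_offSupp (z : Vec p) : l1 z = l1 (onSupp β z) + l1 (offSupp β z) := by
  simp only [l1, ← sum_add_distrib]
  exact sum_congr rfl fun i _ => by by_cases hi : β i = 0 <;> simp [onSupp, offSupp, hi]

lemma sq_div_add_sq_l2_perpOnSupp_add_sq_l2_offSupp (z : Vec p) :
    (dotp z β / l2 β) ^ 2 + l2 (perpOnSupp β z) ^ 2 + l2 (offSupp β z) ^ 2 = l2 z ^ 2 := by
  have hz : z = (dotp z β / l2 β ^ 2) • β + perpOnSupp β z + offSupp β z :=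
    funext (apply_eq_add_perpOnSupp_add_offSupp β z)
  have hP := perpOnSupp_dotProduct_self β z
  have hC := offSupp_dotProduct_self β z
  have hPC := perpOnSupp_dotProduct_offSupp β z z
  conv_rhs => rw [sq_l2, hz]
  simp only [add_dotProduct, dotProduct_add, smul_dotProduct, dotProduct_smul, smul_eq_mul,
    dotProduct_comm β, hP, hC, hPC, dotProduct_comm (offSupp β z) (perpOnSupp β z), ← sq_l2]
  rcases eq_or_ne (l2 β) 0 with h | h
  · simp [h]
  · field_simp
    ring

end Decomposition

def subgradDir (s : ℝ) (β : Vec p) : Vec p := fun i => β i / l2 β + (√s)⁻¹ * Real.sign (β i)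

lemma dotp_subgradDir_self (s : ℝ) (β : Vec p) : dotp (subgradDir s β) β = thetaFactor s β := by
  have hterm : ∀ i, subgradDir s β i * β i = β i ^ 2 / l2 β + (√s)⁻¹ * |β i| := fun i => by
    rw [subgradDir, ← Real.sign_mul_self_eq_abs]; ring
  simp only [dotp, hterm, sum_add_distrib, ← sum_div, ← mul_sum]
  rw [← l1, thetaFactor, l2, Real.div_sqrt]

lemma abs_dotp_subgradDir_le (s : ℝ) (β u : Vec p) :
    |dotp (subgradDir s β) u| ≤ |dotp u β / l2 β| + (√s)⁻¹ * l1 (onSupp β u) := by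
  have hsplit : dotp (subgradDir s β) u
      = dotp u β / l2 β + (√s)⁻¹ * ∑ i, Real.sign (β i) * u i := by
    simp only [dotp, subgradDir, add_mul, sum_add_distrib, mul_sum, sum_div]
    congr 1 <;> exact sum_congr rfl fun i _ => by ring
  have hsign : |∑ i, Real.sign (β i) * u i| ≤ l1 (onSupp β u) :=
    (abs_sum_le_sum_abs _ _).trans_eq <| sum_congr rfl fun i _ => by
      by_cases hi : β i = 0
      · simp [onSupp, hi]
      · rcases Real.sign_apply_eq_of_ne_zero _ hi with h | h <;> simp [onSupp, hi, h]
  rw [hsplit]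
  refine (abs_add_le _ _).trans (add_le_add_right ?_ _)
  rw [abs_mul, abs_of_nonneg (inv_nonneg.2 (Real.sqrt_nonneg s))]
  exact mul_le_mul_of_nonneg_left hsign (inv_nonneg.2 (Real.sqrt_nonneg s))

lemma frob_add_left (A B M : Mat p) : frob (A + B) M = frob A M + frob B M := by
  simp only [frob, Matrix.add_apply, add_mul, sum_add_distrib]

lemma frob_add_right (M A B : Mat p) : frob M (A + B) = frob M A + frob M B := by
  simp only [frob, Matrix.add_apply, mul_add, sum_add_distrib]

lemma frob_sub_left (A B M : Mat p) : frob (A - B) M = frob A M - frob B M := by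
  simp only [frob, Matrix.sub_apply, sub_mul, sum_sub_distrib]

lemma frob_vecMulVec_vecMulVec (a b c d : Vec p) :
    frob (vecMulVec a b) (vecMulVec c d) = dotp a c * dotp b d := by
  simp only [frob, dotp, vecMulVec_apply, sum_mul_sum]
  exact sum_congr rfl fun i _ => sum_congr rfl fun j _ => by ring

lemma dotp_mulVec (M : Mat p) (u v : Vec p) : dotp (M *ᵥ u) v = frob M (vecMulVec v u) := by
  simp only [dotp, frob, mulVec, dotProduct, vecMulVec_apply, sum_mul]
  exact sum_congr rfl fun i _ => sum_congr rfl fun j _ => by ring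

lemma dotp_vecMulVec_add_mulVec (w : Vec p) (M : Mat p) (u v : Vec p) :
    dotp ((vecMulVec w w + M) *ᵥ u) v = dotp w u * dotp w v + frob M (vecMulVec v u) := by
  rw [dotp_mulVec, frob_add_left, frob_vecMulVec_vecMulVec, mul_comm]

section PerpComponent

variable (β : Vec p)

/-- The component of `vecMulVec v u` in `T^⊥ ∩ I^⊥`, for `T = {x ⊗ β + β ⊗ y}` and `I` the
matrices supported on `supp β × supp β`. -/
def perpComponent (v u : Vec p) : Mat p :=
  vecMulVec (perpOnSupp β v) (offSupp β u) + vecMulVec (offSupp β v) (perpOnSupp β u)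
    + vecMulVec (offSupp β v) (offSupp β u)

lemma vecMulVec_eq_add_perpComponent (v u : Vec p) :
    vecMulVec v u =
      (vecMulVec (fun i => dotp u β / l2 β ^ 2 * v i) β
        + vecMulVec β (fun j => dotp v β / l2 β ^ 2 * (u j - dotp u β / l2 β ^ 2 * β j)))
      + vecMulVec (perpOnSupp β v) (perpOnSupp β u) + perpComponent β v u := by
  ext i j
  have hv := apply_eq_add_perpOnSupp_add_offSupp β v i
  have hu := apply_eq_add_perpOnSupp_add_offSupp β u j
  simp only [perpComponent, Matrix.add_apply, vecMulVec_apply]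
  rw [hv, hu]
  ring

lemma frob_perpComponent_vecMulVec_add (v u x y : Vec p) :
    frob (perpComponent β v u) (vecMulVec x β + vecMulVec β y) = 0 := by
  simp only [perpComponent, frob_add_left, frob_add_right, frob_vecMulVec_vecMulVec,
    dotp_eq_dotProduct, offSupp_dotProduct_self, perpOnSupp_dotProduct_self]
  ring

lemma perpComponent_apply_eq_zero (v u : Vec p) {i j : Fin p} (hi : β i ≠ 0) (hj : β j ≠ 0) :
    perpComponent β v u i j = 0 := by
  simp [perpComponent, offSupp, vecMulVec_apply, hi, hj]

lemma frob_vecMulVec_eq_frob_perpComponent {M : Mat p}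
    (hT : ∀ x y : Vec p, frob M (vecMulVec x β + vecMulVec β y) = 0)
    (hI : ∀ i j, β i ≠ 0 → β j ≠ 0 → M i j = 0) (v u : Vec p) :
    frob M (vecMulVec v u) = frob M (perpComponent β v u) := by
  have hII : frob M (vecMulVec (perpOnSupp β v) (perpOnSupp β u)) = 0 :=
    sum_eq_zero fun i _ => sum_eq_zero fun j _ => by
      by_cases hi : β i = 0
      · simp [vecMulVec_apply, perpOnSupp_eq_zero β hi]
      by_cases hj : β j = 0
      · simp [vecMulVec_apply, perpOnSupp_eq_zero β hj]
      · simp [hI i j hi hj]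
  rw [vecMulVec_eq_add_perpComponent β v u, frob_add_right, frob_add_right, hT, hII,
    zero_add, zero_add]

lemma frob_perpComponent (M : Mat p) (v u : Vec p) :
    frob M (perpComponent β v u) =
      dotp (M *ᵥ offSupp β u) (perpOnSupp β v) + dotp (M *ᵥ perpOnSupp β u) (offSupp β v)
        + dotp (M *ᵥ offSupp β u) (offSupp β v) := by
  simp only [perpComponent, frob_add_right, dotp_mulVec]

end PerpComponent

lemma le_of_sq_add_sq_add_sq_le {a b c A : ℝ} (hA : 0 ≤ A) (h : a ^ 2 + b ^ 2 + c ^ 2 ≤ A ^ 2) :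
    a ≤ A ∧ b ≤ A ∧ c ≤ A :=
  ⟨le_of_sq_le_sq (by nlinarith) hA, le_of_sq_le_sq (by nlinarith) hA,
    le_of_sq_le_sq (by nlinarith) hA⟩

/-- Termwise AM-GM (`2AB · ab ≤ B²a² + A²b²`, etc.) bounds `2AB` times the left side by
`B²(a² + q² + x²) + A²(b² + q'² + y²) ≤ 2A²B²`. -/
lemma bilinear_le_mul_of_sq_le {a b q q' x y A B : ℝ} (hq' : 0 ≤ q') (hb : 0 ≤ b) (hy : 0 ≤ y)
    (hA : 0 ≤ A) (hB : 0 ≤ B) (hU : a ^ 2 + q ^ 2 + x ^ 2 ≤ A ^ 2)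
    (hV : b ^ 2 + q' ^ 2 + y ^ 2 ≤ B ^ 2) :
    a * b + 2 / 5 * (x * q' + q * y) + 1 / 5 * (x * y) ≤ A * B := by
  have key : A * B * (a * b + 2 / 5 * (x * q' + q * y) + 1 / 5 * (x * y)) ≤ A * B * (A * B) := by
    nlinarith [sq_nonneg (B * a - A * b), sq_nonneg (B * x - A * q'), sq_nonneg (B * q - A * y),
      sq_nonneg (B * x - A * y)]
  rcases (mul_nonneg hA hB).lt_or_eq with hAB | hAB
  · exact le_of_mul_le_mul_left key hAB
  · obtain ⟨haA, hqA, hxA⟩ := le_of_sq_add_sq_add_sq_le hA hU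
    obtain ⟨hbB, hq'B, hyB⟩ := le_of_sq_add_sq_add_sq_le hB hV
    nlinarith [mul_le_mul haA hbB hb hA, mul_le_mul hxA hq'B hq' hA, mul_le_mul hqA hyB hy hA,
      mul_le_mul hxA hyB hy hA]

lemma subgradient_scalar_bound {a b q q' x y A B l l' m m' : ℝ} (hq' : 0 ≤ q') (hb : 0 ≤ b)
    (hy : 0 ≤ y) (hA : 0 ≤ A) (hB : 0 ≤ B) (hl : 0 ≤ l) (hl' : 0 ≤ l') (hm : 0 ≤ m)
    (hm' : 0 ≤ m') (hU : a ^ 2 + q ^ 2 + x ^ 2 ≤ A ^ 2) (hV : b ^ 2 + q' ^ 2 + y ^ 2 ≤ B ^ 2) :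
    (a + l) * (b + m) + 1 / 5 * ((x + l') * (2 * q') + 2 * q * (y + m') + (x + l') * (y + m'))
      ≤ (A + l + l') * (B + m + m') := by
  have hF := bilinear_le_mul_of_sq_le hq' hb hy hA hB hU hV
  obtain ⟨haA, hqA, hxA⟩ := le_of_sq_add_sq_add_sq_le hA hU
  obtain ⟨hbB, hq'B, hyB⟩ := le_of_sq_add_sq_add_sq_le hB hV
  nlinarith [mul_le_mul_of_nonneg_right haA hm, mul_le_mul_of_nonneg_left hbB hl,
    mul_le_mul_of_nonneg_left hq'B hl', mul_le_mul_of_nonneg_left hyB hl',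
    mul_le_mul_of_nonneg_right hqA hm', mul_le_mul_of_nonneg_right hxA hm', mul_nonneg hl hm',
    mul_nonneg hl' hm, mul_nonneg hl' hm']

lemma thetaFactor_nonneg (s : ℝ) (u : Vec p) : 0 ≤ thetaFactor s u :=
  add_nonneg (l2_nonneg u) (mul_nonneg (inv_nonneg.2 (Real.sqrt_nonneg s)) (l1_nonneg u))

lemma frob_perpComponent_le {s : ℕ} {β : Vec p} (hβ : IsSparse s β) {M : Mat p}
    (hM : ∀ u v : Vec p, dotp (M *ᵥ u) v ≤ 1 / 5 * theta s u v) (u v : Vec p) :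
    frob M (perpComponent β v u) ≤ 1 / 5 *
      (thetaFactor s (offSupp β u) * (2 * l2 (perpOnSupp β v))
        + 2 * l2 (perpOnSupp β u) * thetaFactor s (offSupp β v)
        + thetaFactor s (offSupp β u) * thetaFactor s (offSupp β v)) := by
  have hP : ∀ z, thetaFactor s (perpOnSupp β z) ≤ 2 * l2 (perpOnSupp β z) := fun z =>
    thetaFactor_le_two_mul_l2 hβ fun _ hi => perpOnSupp_eq_zero β hi
  have h₁ := hM (offSupp β u) (perpOnSupp β v)
  have h₂ := hM (perpOnSupp β u) (offSupp β v)
  have h₃ := hM (offSupp β u) (offSupp β v)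
  rw [frob_perpComponent]
  calc _ ≤ 1 / 5 * theta s (offSupp β u) (perpOnSupp β v)
        + 1 / 5 * theta s (perpOnSupp β u) (offSupp β v)
        + 1 / 5 * theta s (offSupp β u) (offSupp β v) := by linarith
    _ ≤ _ := by
      simp only [theta_eq_mul, ← mul_add]
      gcongr
      · exact thetaFactor_nonneg _ _
      · exact hP v
      · exact thetaFactor_nonneg _ _
      · exact hP u

lemma dotp_subgradDir_mul_add_frob_perpComponent_le {s : ℕ} {β : Vec p} (hβ : IsSparse s β)
    {M : Mat p} (hM : ∀ u v : Vec p, dotp (M *ᵥ u) v ≤ 1 / 5 * theta s u v) (u v : Vec p) :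
    dotp (subgradDir s β) u * dotp (subgradDir s β) v + frob M (perpComponent β v u)
      ≤ theta s u v := by
  set c := (√(s : ℝ))⁻¹
  have hc : 0 ≤ c := inv_nonneg.2 (Real.sqrt_nonneg _)
  have hθ : ∀ z, thetaFactor s z = l2 z + c * l1 (onSupp β z) + c * l1 (offSupp β z) := fun z => by
    rw [thetaFactor, l1_eq_l1_onSupp_add_l1_offSupp β z]
    ring
  have hpyth : ∀ z, |dotp z β / l2 β| ^ 2 + l2 (perpOnSupp β z) ^ 2 + l2 (offSupp β z) ^ 2
      ≤ l2 z ^ 2 := fun z => by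
    rw [sq_abs, sq_div_add_sq_l2_perpOnSupp_add_sq_l2_offSupp]
  have hw : dotp (subgradDir s β) u * dotp (subgradDir s β) v
      ≤ (|dotp u β / l2 β| + c * l1 (onSupp β u)) * (|dotp v β / l2 β| + c * l1 (onSupp β v)) :=
    (le_abs_self _).trans <| (abs_mul _ _).trans_le <| mul_le_mul
      (abs_dotp_subgradDir_le s β u) (abs_dotp_subgradDir_le s β v) (abs_nonneg _)
      (add_nonneg (abs_nonneg _) (mul_nonneg hc (l1_nonneg _)))
  calc _ ≤ _ := add_le_add hw (frob_perpComponent_le hβ hM u v)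
    _ ≤ _ := subgradient_scalar_bound (l2_nonneg _) (abs_nonneg _) (l2_nonneg _) (l2_nonneg u)
        (l2_nonneg v) (mul_nonneg hc (l1_nonneg _)) (mul_nonneg hc (l1_nonneg _))
        (mul_nonneg hc (l1_nonneg _)) (mul_nonneg hc (l1_nonneg _)) (hpyth u) (hpyth v)
    _ = theta s u v := by rw [theta_eq_mul, hθ u, hθ v]

theorem subgradient_case_three_general {p s : ℕ} (β : Vec p)
    (hβ : IsSparse s β) (Wt Wp : Mat p)
    (hWt : ∀ u v : Vec p, dotp (Wt.mulVec u) v ≤ (1 / 5) * theta (s : ℝ) u v)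
    -- `Wp` lies in `T^⊥` :
    (hWp_T : ∀ x y : Vec p, frob Wp (Matrix.vecMulVec x β + Matrix.vecMulVec β y) = 0)
    -- `Wp` lies in `I^⊥` :
    (hWp_I : ∀ i j, β i ≠ 0 → β j ≠ 0 → Wp i j = 0)
    -- `Wt - Wp` is orthogonal to `T^⊥ ∩ I^⊥`, so `Wp` is the orthogonal projection of `Wt` :
    (hproj : ∀ N : Mat p,
      (∀ x y : Vec p, frob N (Matrix.vecMulVec x β + Matrix.vecMulVec β y) = 0) →
      (∀ i j, β i ≠ 0 → β j ≠ 0 → N i j = 0) →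
      frob (Wt - Wp) N = 0) :
    let w : Vec p := fun i => β i / l2 β + (Real.sqrt (s : ℝ))⁻¹ * Real.sign (β i)
    let W : Mat p := Matrix.vecMulVec w w + Wp
    dotp (W.mulVec β) β = theta (s : ℝ) β β ∧
    ∀ u v : Vec p, dotp (W.mulVec u) v ≤ theta (s : ℝ) u v := by
  show dotp ((vecMulVec (subgradDir s β) (subgradDir s β) + Wp) *ᵥ β) β = theta s β β ∧
    ∀ u v, dotp ((vecMulVec (subgradDir s β) (subgradDir s β) + Wp) *ᵥ u) v ≤ theta s u v
  simp only [dotp_vecMulVec_add_mulVec]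
  refine ⟨?_, fun u v => ?_⟩
  · have hββ : frob Wp (vecMulVec β β) = 0 := by simpa using hWp_T β 0
    rw [hββ, add_zero, dotp_subgradDir_self, theta_eq_mul]
  · have hWtWp : frob Wp (perpComponent β v u) = frob Wt (perpComponent β v u) := by
      have h := hproj _ (frob_perpComponent_vecMulVec_add β v u)
        fun _ _ => perpComponent_apply_eq_zero β v u
      rw [frob_sub_left, sub_eq_zero] at h
      exact h.symm
    rw [frob_vecMulVec_eq_frob_perpComponent β hWp_T hWp_I, hWtWp]
    exact dotp_subgradDir_mul_add_frob_perpComponent_le hβ hWt u v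

/-- Lemma A.2, case 3. Adding the orthogonal projection onto `T^⊥ ∩ I^⊥` of any
matrix `W̃` with `⟨W̃u,v⟩ ≤ (1/5)θ_s(u,v)` to `w_β ⊗ w_β` gives a subgradient of the mixed
atomic norm at `β ⊗ β`.  Here `Wp` is characterized as the orthogonal projection (in the
Frobenius inner product) of `Wt` onto `T^⊥ ∩ I^⊥`, where `T = {x⊗β + β⊗y}` and `I` is the
subspace of matrices supported on `I × I` for `I` the support of `β`. -/
theorem subgradient_case_three {p s : ℕ} (hs : 0 < s) (β : Vec p)
    (hβ : IsSparse s β) (hβ0 : β ≠ 0) (Wt Wp : Mat p)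
    (hWt : ∀ u v : Vec p, dotp (Wt.mulVec u) v ≤ (1 / 5) * theta (s : ℝ) u v)
    -- `Wp` lies in `T^⊥` :
    (hWp_T : ∀ x y : Vec p, frob Wp (Matrix.vecMulVec x β + Matrix.vecMulVec β y) = 0)
    -- `Wp` lies in `I^⊥` :
    (hWp_I : ∀ i j, β i ≠ 0 → β j ≠ 0 → Wp i j = 0)
    -- `Wt - Wp` is orthogonal to `T^⊥ ∩ I^⊥`, so `Wp` is the orthogonal projection of `Wt` :
    (hproj : ∀ N : Mat p,
      (∀ x y : Vec p, frob N (Matrix.vecMulVec x β + Matrix.vecMulVec β y) = 0) →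
      (∀ i j, β i ≠ 0 → β j ≠ 0 → N i j = 0) →
      frob (Wt - Wp) N = 0) :
    let w : Vec p := fun i => β i / l2 β + (Real.sqrt (s : ℝ))⁻¹ * Real.sign (β i)
    let W : Mat p := Matrix.vecMulVec w w + Wp
    dotp (W.mulVec β) β = theta (s : ℝ) β β ∧
    ∀ u v : Vec p, dotp (W.mulVec u) v ≤ theta (s : ℝ) u v :=
  subgradient_case_three_general β hβ Wt Wp hWt hWp_T hWp_I hproj
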